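/- If L₁, L₂, L₃, L₄ are four pairwise disjoint lines in P^3 that do not all lie on a common quadric surface, then they have at most two common transversals. -/

import Mathlib

/-!
Split `ℂ⁴ = L₀ ⊕ L₁`. Being disjoint from `L₁`, the lines `L₂` and `L₃` become graphs of linear
maps `f g : L₀ → L₁`, and `f` is injective since `L₂` is disjoint from `L₀`. A transversal `W`
is spanned by a point of `L₀` and a point of `L₁`; meeting the graph of `f` forces
`W = span {(v, 0), (0, f v)}`, and meeting the graph of `g` then forces `g v ∥ f v`. Three distinct
transversals give three pairwise independent such `v` in the plane `L₀`; comparing coefficients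
shows `g x ∥ f x` for every `x`. But then `w ↦ det (f w₀, w₁)` is a nonzero quadratic form
vanishing on all four lines.
-/

open Module Submodule MvPolynomial

section LinearAlgebra

variable {K V M N : Type*} [Field K] [AddCommGroup V] [Module K V]
  [AddCommGroup M] [Module K M] [AddCommGroup N] [Module K N]

lemma eq_span_pair_of_linearIndependent {W : Submodule K V} (hW : finrank K W = 2) {x y : V}
    (hx : x ∈ W) (hy : y ∈ W) (hxy : LinearIndependent K ![x, y]) : W = span K {x, y} := by
  have : FiniteDimensional K W := finite_of_finrank_eq_succ hW
  refine (eq_of_le_of_finrank_eq (span_le.2 (Set.insert_subset hx (by simpa using hy))) ?_).symm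
  rw [hW, ← Matrix.range_cons_cons_empty x y ![], finrank_span_eq_card hxy, Fintype.card_fin]

lemma not_linearIndependent_pair_smul (x : V) (a : K) : ¬ LinearIndependent K ![x, a • x] :=
  fun h ↦ by simpa using (LinearIndependent.pair_iff.1 h a (-1) (by simp)).2

lemma eq_smul_of_not_linearIndependent_pair {x y : V} (hx : x ≠ 0) (hy : y ≠ 0)
    (h : ¬ LinearIndependent K ![x, y]) : ∃ a ≠ (0 : K), x = a • y := by
  obtain ⟨a, ha⟩ : ∃ a : K, a • y = x := by simpa [linearIndependent_fin2, hy] using h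
  exact ⟨a, by rintro rfl; simp [← ha] at hx, ha.symm⟩

lemma span_pair_smul {x y : V} {a : K} (ha : a ≠ 0) :
    span K {a • x, a • y} = span K {x, y} := by
  rw [← span_smul_eq_of_isUnit {x, y} a (IsUnit.mk0 a ha), Set.smul_set_insert,
    Set.smul_set_singleton]

lemma forall_exists_eq_smul_of_pairwise_linearIndependent {f g : M →ₗ[K] N} (hM : finrank K M = 2)
    (hf : Function.Injective f) {u v w : M} (huv : LinearIndependent K ![u, v])
    (huw : LinearIndependent K ![u, w]) (hvw : LinearIndependent K ![v, w])
    (hu : ∃ c : K, g u = c • f u) (hv : ∃ c : K, g v = c • f v) (hw : ∃ c : K, g w = c • f w) :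
    ∀ x, ∃ c : K, g x = c • f x := by
  have hspan (x : M) : x ∈ span K {u, v} :=
    eq_span_pair_of_linearIndependent (by rwa [finrank_top]) mem_top mem_top huv ▸ mem_top
  obtain ⟨α, hα⟩ := hu
  obtain ⟨β, hβ⟩ := hv
  obtain ⟨γ, hγ⟩ := hw
  obtain ⟨a, b, rfl⟩ := mem_span_pair.1 (hspan w)
  have ha : a ≠ 0 := by rintro rfl; exact not_linearIndependent_pair_smul v b (by simpa using hvw)
  have hb : b ≠ 0 := by rintro rfl; exact not_linearIndependent_pair_smul u a (by simpa using huw)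
  have hcoeff : (a * α - a * γ) • u + (b * β - b * γ) • v = 0 := by
    apply hf
    simp only [map_add, map_smul, hα, hβ] at hγ
    simp only [map_add, map_smul, map_zero]
    linear_combination (norm := module) hγ
  obtain ⟨hαγ, hβγ⟩ := LinearIndependent.pair_iff.1 huv _ _ hcoeff
  have hαβ : α = β := by
    rw [mul_left_cancel₀ ha (sub_eq_zero.1 hαγ), mul_left_cancel₀ hb (sub_eq_zero.1 hβγ)]
  intro x
  obtain ⟨p, q, rfl⟩ := mem_span_pair.1 (hspan x)
  exact ⟨α, by simp only [map_add, map_smul, hα, hβ, hαβ, smul_smul, smul_add, mul_comm]⟩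

lemma LinearMap.injective_of_disjoint_graph {f : M →ₗ[K] N}
    (h : Disjoint f.graph ((⊤ : Submodule K M).prod ⊥)) : Function.Injective f := by
  rw [injective_iff_map_eq_zero]
  intro x hx
  simpa using disjoint_def.1 h (x, 0) (by simp [hx]) (by simp)

end LinearAlgebra

lemma Set.exists_subset_pair_of_forall_eq_or_eq_or_eq {α : Type*} [Nonempty α] {S : Set α}
    (h : ∀ a ∈ S, ∀ b ∈ S, ∀ c ∈ S, a = b ∨ a = c ∨ b = c) : ∃ A B, S ⊆ {A, B} := by
  by_contra! hS
  obtain ⟨a, ha, -⟩ := Set.not_subset.1 (hS (Classical.arbitrary α) (Classical.arbitrary α))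
  obtain ⟨b, hb, hab⟩ := Set.not_subset.1 (hS a a)
  obtain ⟨c, hc, habc⟩ := Set.not_subset.1 (hS a b)
  simp only [Set.mem_insert_iff, Set.mem_singleton_iff, or_self, not_or] at hab habc
  rcases h a ha b hb c hc with h | h | h
  exacts [hab h.symm, habc.1 h.symm, habc.2 h.symm]

section Transversals

variable {ι K V M : Type*} [Field K] [AddCommGroup V] [Module K V] [AddCommGroup M] [Module K M]

def commonTransversals (K : Type*) [Field K] [Module K V] (L : ι → Submodule K V) :
    Set (Submodule K V) :=
  {W | finrank K W = 2 ∧ ∀ i, W ⊓ L i ≠ ⊥}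

lemma map_mem_commonTransversals_iff {L : ι → Submodule K V} (e : V ≃ₗ[K] M)
    {W : Submodule K V} :
    W.map e.toLinearMap ∈ commonTransversals K (fun i ↦ (L i).map e.toLinearMap) ↔
      W ∈ commonTransversals K L := by
  simp only [commonTransversals, Set.mem_ofPred_eq, LinearEquiv.finrank_map_eq,
    ← map_inf _ e.injective, ne_eq, Submodule.map_eq_bot_iff]

lemma exists_commonTransversals_subset_pair_of_map {L : ι → Submodule K V} (e : V ≃ₗ[K] M)
    (h : ∃ A B, commonTransversals K (fun i ↦ (L i).map e.toLinearMap) ⊆ {A, B}) :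
    ∃ A B, commonTransversals K L ⊆ {A, B} := by
  obtain ⟨A, B, hAB⟩ := h
  refine ⟨A.map e.symm.toLinearMap, B.map e.symm.toLinearMap, fun W hW ↦ ?_⟩
  rcases hAB ((map_mem_commonTransversals_iff e).2 hW) with h | h
  exacts [Or.inl ((map_symm_eq_iff e).2 h).symm, Or.inr ((map_symm_eq_iff e).2 h).symm]

end Transversals

section IsCompl

variable {K V : Type*} [Field K] [AddCommGroup V] [Module K V] {p q : Submodule K V}
  (h : IsCompl p q)

lemma map_prodEquivOfIsCompl_symm_left :
    p.map (prodEquivOfIsCompl p q h).symm.toLinearMap = (⊤ : Submodule K p).prod ⊥ := by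
  ext z
  rw [mem_map_equiv]
  simp [p.add_mem_iff_right z.1.2, mem_left_iff_eq_zero_of_disjoint h.disjoint]

lemma map_prodEquivOfIsCompl_symm_right :
    q.map (prodEquivOfIsCompl p q h).symm.toLinearMap = (⊥ : Submodule K p).prod ⊤ := by
  ext z
  rw [mem_map_equiv]
  simp [q.add_mem_iff_left z.2.2, mem_right_iff_eq_zero_of_disjoint h.disjoint]

lemma exists_map_prodEquivOfIsCompl_symm_eq_graph [FiniteDimensional K V] {r : Submodule K V}
    (hrq : Disjoint r q) (hr : finrank K r = finrank K p) :
    ∃ f : p →ₗ[K] q, r.map (prodEquivOfIsCompl p q h).symm.toLinearMap = f.graph := by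
  set e := (prodEquivOfIsCompl p q h).symm
  have hfst : Function.Injective (LinearMap.fst K p q ∘ₗ (r.map e.toLinearMap).subtype) := by
    rw [injective_iff_map_eq_zero]
    rintro ⟨⟨x, y⟩, hz⟩ (rfl : x = 0)
    rw [mem_map_equiv] at hz
    simpa [e, mem_left_iff_eq_zero_of_disjoint hrq] using hz
  exact Submodule.exists_eq_graph ⟨hfst, (LinearMap.injective_iff_surjective_of_finrank_eq_finrank
    (by rw [LinearEquiv.finrank_map_eq, hr])).1 hfst⟩

end IsCompl

section Graphs

variable {K M N : Type*} [Field K] [AddCommGroup M] [Module K M] [AddCommGroup N] [Module K N]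
  {f g : M →ₗ[K] N} {W : Submodule K (M × N)}

def linesOfGraphs (f g : M →ₗ[K] N) : Fin 4 → Submodule K (M × N) :=
  ![(⊤ : Submodule K M).prod ⊥, (⊥ : Submodule K M).prod ⊤, f.graph, g.graph]

lemma exists_inl_mem_of_inf_ne_bot (h : W ⊓ (⊤ : Submodule K M).prod ⊥ ≠ ⊥) :
    ∃ x ≠ 0, (x, (0 : N)) ∈ W := by
  obtain ⟨⟨x, y⟩, ⟨hW, hxy⟩, h0⟩ := exists_mem_ne_zero_of_ne_bot h
  obtain rfl : y = 0 := by simpa using hxy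
  exact ⟨x, by simpa using h0, hW⟩

lemma exists_inr_mem_of_inf_ne_bot (h : W ⊓ (⊥ : Submodule K M).prod ⊤ ≠ ⊥) :
    ∃ y ≠ 0, ((0 : M), y) ∈ W := by
  obtain ⟨⟨x, y⟩, ⟨hW, hxy⟩, h0⟩ := exists_mem_ne_zero_of_ne_bot h
  obtain rfl : x = 0 := by simpa using hxy
  exact ⟨y, by simpa using h0, hW⟩

lemma exists_graph_mem_of_inf_ne_bot (h : W ⊓ f.graph ≠ ⊥) : ∃ x ≠ 0, (x, f x) ∈ W := by
  obtain ⟨⟨x, y⟩, ⟨hW, hxy⟩, h0⟩ := exists_mem_ne_zero_of_ne_bot h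
  obtain rfl : y = f x := by simpa using hxy
  exact ⟨x, by rintro rfl; simp at h0, hW⟩

lemma linearIndependent_inl_inr {x : M} {y : N} (hx : x ≠ 0) (hy : y ≠ 0) :
    LinearIndependent K ![(x, (0 : N)), ((0 : M), y)] :=
  LinearIndependent.pair_iff.2 fun s t hst ↦ by
    simpa only [Prod.smul_mk, smul_zero, Prod.mk_add_mk, add_zero, zero_add, Prod.mk_eq_zero,
      smul_eq_zero, hx, hy, or_false] using hst

lemma exists_eq_smul_of_mem_span_inl_inr {x : M} {y : N} {z : M × N}
    (hz : z ∈ span K {(x, 0), (0, y)}) : ∃ a b : K, z = (a • x, b • y) := by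
  obtain ⟨a, b, rfl⟩ := mem_span_pair.1 hz
  exact ⟨a, b, by simp⟩

lemma exists_eq_span_of_mem_commonTransversals (hf : Function.Injective f)
    (hW : W ∈ commonTransversals K (linesOfGraphs f g)) :
    ∃ v ≠ 0, (∃ c : K, g v = c • f v) ∧ W = span K {(v, 0), (0, f v)} := by
  obtain ⟨hW2, hmeet⟩ := hW
  obtain ⟨x, hx, hxW⟩ := exists_inl_mem_of_inf_ne_bot (hmeet 0)
  obtain ⟨y, hy, hyW⟩ := exists_inr_mem_of_inf_ne_bot (hmeet 1)
  obtain ⟨v, hv, hvW⟩ := exists_graph_mem_of_inf_ne_bot (hmeet 2)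
  obtain ⟨u, hu, huW⟩ := exists_graph_mem_of_inf_ne_bot (hmeet 3)
  have hfv : f v ≠ 0 := fun h ↦ hv (hf (h.trans f.map_zero.symm))
  obtain ⟨a, b, hab⟩ := exists_eq_smul_of_mem_span_inl_inr <|
    eq_span_pair_of_linearIndependent hW2 hxW hyW (linearIndependent_inl_inr hx hy) ▸ hvW
  obtain ⟨hva, hfvb⟩ := Prod.mk.inj hab
  have hW : W = span K {(v, 0), (0, f v)} := by
    refine eq_span_pair_of_linearIndependent hW2 ?_ ?_ (linearIndependent_inl_inr hv hfv)
    · simpa [hva] using W.smul_mem a hxW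
    · simpa [hfvb] using W.smul_mem b hyW
  refine ⟨v, hv, ?_, hW⟩
  obtain ⟨c, d, hcd⟩ := exists_eq_smul_of_mem_span_inl_inr (hW ▸ huW)
  obtain ⟨huc, hgu⟩ := Prod.mk.inj hcd
  have hc : c ≠ 0 := by rintro rfl; simp [huc] at hu
  refine ⟨c⁻¹ * d, ?_⟩
  rw [mul_smul, ← hgu, huc, map_smul, smul_smul, inv_mul_cancel₀ hc, one_smul]

lemma linearIndependent_of_span_inl_inr_ne {v v' : M} (hv : v ≠ 0) (hv' : v' ≠ 0)
    (h : span K {(v, 0), (0, f v)} ≠ span K {(v', 0), (0, f v')}) :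
    LinearIndependent K ![v, v'] := by
  by_contra hdep
  obtain ⟨a, ha, rfl⟩ := eq_smul_of_not_linearIndependent_pair hv hv' hdep
  exact h (by simpa using span_pair_smul (x := ((v', 0) : M × N)) (y := (0, f v')) ha)

theorem exists_commonTransversals_linesOfGraphs_subset_pair (hM : finrank K M = 2)
    (hf : Function.Injective f) (hfg : ¬ ∀ x, ∃ c : K, g x = c • f x) :
    ∃ A B, commonTransversals K (linesOfGraphs f g) ⊆ {A, B} := by
  refine Set.exists_subset_pair_of_forall_eq_or_eq_or_eq fun W₁ h₁ W₂ h₂ W₃ h₃ ↦ ?_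
  obtain ⟨v₁, hv₁, he₁, rfl⟩ := exists_eq_span_of_mem_commonTransversals hf h₁
  obtain ⟨v₂, hv₂, he₂, rfl⟩ := exists_eq_span_of_mem_commonTransversals hf h₂
  obtain ⟨v₃, hv₃, he₃, rfl⟩ := exists_eq_span_of_mem_commonTransversals hf h₃
  by_contra! hne
  exact hfg <| forall_exists_eq_smul_of_pairwise_linearIndependent hM hf
    (linearIndependent_of_span_inl_inr_ne hv₁ hv₂ hne.1)
    (linearIndependent_of_span_inl_inr_ne hv₁ hv₃ hne.2.1)
    (linearIndependent_of_span_inl_inr_ne hv₂ hv₃ hne.2.2) he₁ he₂ he₃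

end Graphs

section Quadric

lemma exists_isHomogeneous_eval_eq_det {σ R N : Type*} [Fintype σ] [CommRing R]
    [AddCommGroup N] [Module R N] (b : Basis (Fin 2) R N) (Φ Ψ : (σ → R) →ₗ[R] N) :
    ∃ Q : MvPolynomial σ R, Q.IsHomogeneous 2 ∧ ∀ w, eval w Q = b.det ![Φ w, Ψ w] := by
  classical
  let P (φ : (σ → R) →ₗ[R] N) (i : Fin 2) : MvPolynomial σ R :=
    (LinearMap.toMatrix' (b.equivFun.toLinearMap ∘ₗ φ)).toMvPolynomial i
  have hP (φ i) : (P φ i).IsHomogeneous 1 := Matrix.toMvPolynomial_isHomogeneous _ _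
  refine ⟨P Φ 0 * P Ψ 1 - P Ψ 0 * P Φ 1, ((hP _ _).mul (hP _ _)).sub ((hP _ _).mul (hP _ _)),
    fun w ↦ ?_⟩
  simp [P, Matrix.toMvPolynomial_eval_eq_apply, Basis.det_apply, Matrix.det_fin_two,
    Basis.toMatrix_apply]

variable {K M N : Type*} [Field K] [AddCommGroup M] [Module K M] [AddCommGroup N] [Module K N]
  {f g : M →ₗ[K] N}

lemma det_eq_zero_of_mem_linesOfGraphs (hfg : ∀ x, ∃ c : K, g x = c • f x)
    (b : Basis (Fin 2) K N) {i : Fin 4} {z : M × N} (hz : z ∈ linesOfGraphs f g i) :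
    b.det ![f z.1, z.2] = 0 := by
  have hsmul (c : K) : b.det ![f z.1, c • f z.1] = 0 :=
    b.det.map_linearDependent _ (not_linearIndependent_pair_smul _ c)
  fin_cases i <;> simp only [linesOfGraphs, Fin.reduceFinMk, Matrix.cons_val, mem_prod, mem_top,
    mem_bot, true_and, and_true, LinearMap.mem_graph_iff] at hz
  · simpa [hz] using hsmul 0
  · exact b.det.map_coord_zero 0 (by simp [hz])
  · simpa [hz] using hsmul 1
  · obtain ⟨c, hc⟩ := hfg z.1
    simpa [hz, hc] using hsmul c

lemma exists_quadric_of_forall_exists_smul {σ : Type*} [Fintype σ] [Nontrivial M]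
    (e : (σ → K) ≃ₗ[K] M × N) (hN : finrank K N = 2) (hf : Function.Injective f)
    (hfg : ∀ x, ∃ c : K, g x = c • f x) :
    ∃ Q : MvPolynomial σ K, Q ≠ 0 ∧ Q.IsHomogeneous 2 ∧
      ∀ i, ∀ w, e w ∈ linesOfGraphs f g i → eval w Q = 0 := by
  have : Module.Finite K N := finite_of_finrank_eq_succ hN
  let b := finBasisOfFinrankEq K N hN
  obtain ⟨Q, hQ, hQeval⟩ := exists_isHomogeneous_eval_eq_det b
    (f ∘ₗ LinearMap.fst K M N ∘ₗ e.toLinearMap) (LinearMap.snd K M N ∘ₗ e.toLinearMap)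
  refine ⟨Q, ?_, hQ, fun i w hw ↦ (hQeval w).trans (det_eq_zero_of_mem_linesOfGraphs hfg b hw)⟩
  obtain ⟨x, hx⟩ := exists_ne (0 : M)
  obtain ⟨y, hxy⟩ := exists_linearIndependent_pair_of_one_lt_finrank (by omega : 1 < finrank K N)
    (fun h ↦ hx (hf (h.trans f.map_zero.symm)) : f x ≠ 0)
  have hdet : IsUnit (b.det ![f x, y]) :=
    b.is_basis_iff_det.1 ⟨hxy, hxy.span_eq_top_of_card_eq_finrank (by simp [hN])⟩
  rintro rfl
  exact hdet.ne_zero (by simpa using (hQeval (e.symm (x, y))).symm)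

end Quadric

/-- If L₁, L₂, L₃, L₄ are four pairwise disjoint lines in ℙ³ that do not
all lie on a common quadric surface, then they have at most two common transversals.

Lines are 2-dimensional linear subspaces of ℂ⁴ (disjoint in ℙ³ means trivially
intersecting subspaces); a quadric surface is the zero set of a nonzero homogeneous
degree-2 polynomial in 4 variables over ℂ; a common transversal is a line meeting all
four lines. -/
theorem stmt_14 (L : Fin 4 → Submodule ℂ (Fin 4 → ℂ))
    (hrk : ∀ i, Module.finrank ℂ (L i) = 2)
    (hdisj : ∀ i j, i ≠ j → L i ⊓ L j = ⊥)
    (hnoq : ¬ ∃ q : MvPolynomial (Fin 4) ℂ, q ≠ 0 ∧ q.IsHomogeneous 2 ∧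
          ∀ i, ∀ w ∈ L i, MvPolynomial.eval w q = 0) :
    ∃ A B : Submodule ℂ (Fin 4 → ℂ),
      {W : Submodule ℂ (Fin 4 → ℂ) |
        Module.finrank ℂ W = 2 ∧ ∀ i, W ⊓ L i ≠ ⊥} ⊆ {A, B} := by
  have h01 : IsCompl (L 0) (L 1) :=
    (isCompl_iff_disjoint _ _ (by simp [hrk])).2 (disjoint_iff.2 (hdisj 0 1 (by decide)))
  set e := ((L 0).prodEquivOfIsCompl (L 1) h01).symm
  obtain ⟨f, hf⟩ := exists_map_prodEquivOfIsCompl_symm_eq_graph h01 (r := L 2)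
    (disjoint_iff.2 (hdisj 2 1 (by decide))) (by rw [hrk, hrk])
  obtain ⟨g, hg⟩ := exists_map_prodEquivOfIsCompl_symm_eq_graph h01 (r := L 3)
    (disjoint_iff.2 (hdisj 3 1 (by decide))) (by rw [hrk, hrk])
  have hlines : (fun i ↦ (L i).map e.toLinearMap) = linesOfGraphs f g := by
    funext i
    fin_cases i
    exacts [map_prodEquivOfIsCompl_symm_left h01, map_prodEquivOfIsCompl_symm_right h01, hf, hg]
  have hf_inj : Function.Injective f := LinearMap.injective_of_disjoint_graph <| by
    rw [disjoint_iff, ← hf, ← map_prodEquivOfIsCompl_symm_left h01, ← map_inf _ e.injective,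
      hdisj 2 0 (by decide), Submodule.map_bot]
  have hfg : ¬ ∀ x, ∃ c : ℂ, g x = c • f x := fun hfg ↦ by
    have : Nontrivial (L 0) := nontrivial_of_finrank_eq_succ (hrk 0)
    obtain ⟨Q, hQ0, hQ, hQL⟩ := exists_quadric_of_forall_exists_smul e (hrk 1) hf_inj hfg
    exact hnoq ⟨Q, hQ0, hQ, fun i w hw ↦ hQL i w (hlines ▸ mem_map_of_mem hw)⟩
  exact exists_commonTransversals_subset_pair_of_map e
    (hlines ▸ exists_commonTransversals_linesOfGraphs_subset_pair (hrk 0) hf_inj hfg)
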